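/- arXiv:0812.1951 — 2 statements merged into one kernel-verified Lean document; each statement's English description precedes it below -/
import Mathlib

section
/- Let L ⊆ Σ_{r^m}* be a regular language. Then there exists a finite set of rays R ⊆ ℝ^m × ℝ₊ such that cl(conv(ρ(L))) = P(R), i.e., the closure of the convex hull of ρ(L) is represented by a finite set of rays. -/
/-- The alphabet `Σ_{r^m}` of digit vectors. -/
abbrev Alpha (r m : ℕ) := Fin m → Fin r
abbrev Word (r m : ℕ) := List (Alpha r m)

/-- `ρ(b₁⋯bₙ) = Σᵢ r^(i-1)·bᵢ` (least significant digit first), viewed in `ℝ^m`. -/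
noncomputable def rho (r m : ℕ) : Word r m → (Fin m → ℝ)
  | [] => 0
  | b :: w => (fun j => (b j : ℝ)) + (r : ℝ) • rho r m w

/-- `Γ_σ(x) = r^|σ|·x + ρ(σ)`. -/
noncomputable def Gam (r m : ℕ) (σ : Word r m) (x : Fin m → ℝ) : Fin m → ℝ :=
  (r : ℝ) ^ σ.length • x + rho r m σ

/-- The inverse bijection `Γ_σ⁻¹(y) = (y - ρ(σ))/r^|σ|`. -/
noncomputable def GamInv (r m : ℕ) (σ : Word r m) (y : Fin m → ℝ) : Fin m → ℝ :=
  ((r : ℝ) ^ σ.length)⁻¹ • (y - rho r m σ)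

/-- `ξ(σ) = ρ(σ)/(1 - r^|σ|)` (meaningful for nonempty `σ`). -/
noncomputable def xi (r m : ℕ) (σ : Word r m) : Fin m → ℝ :=
  (1 - (r : ℝ) ^ σ.length)⁻¹ • rho r m σ

/-- `ρ(L) = {ρ(σ) : σ ∈ L}`. -/
def rhoSet (r m : ℕ) (L : Set (Word r m)) : Set (Fin m → ℝ) :=
  {x | ∃ σ ∈ L, x = rho r m σ}

/-- `ξ(L) = {ξ(σ) : σ ∈ L, σ ≠ ε}`. -/
def xiSet (r m : ℕ) (L : Set (Word r m)) : Set (Fin m → ℝ) :=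
  {x | ∃ σ ∈ L, σ ≠ [] ∧ x = xi r m σ}

/-- Kleene star of a language. -/
def kstar' {α : Type*} (L : Set (List α)) : Set (List α) :=
  {w | ∃ ws : List (List α), (∀ u ∈ ws, u ∈ L) ∧ w = ws.flatten}

/-- Concatenation of two languages. -/
def catL {α : Type*} (A B : Set (List α)) : Set (List α) :=
  {w | ∃ a ∈ A, ∃ b ∈ B, w = a ++ b}

/-- `chainLang σ Ls n = σ_{n+1}·(L_n)*·σ_n ⋯ (L_1)*·σ_1`. -/
def chainLang {α : Type*} (σ : ℕ → List α) (Ls : ℕ → Set (List α)) : ℕ → Set (List α)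
  | 0 => {σ 1}
  | n + 1 => catL {σ (n + 2)} (catL (kstar' (Ls (n + 1))) (chainLang σ Ls n))

/-- `catDown σ hi lo = σ_hi·σ_{hi-1}⋯σ_lo` (empty if `lo > hi`). -/
def catDown {α : Type*} (σ : ℕ → List α) (hi lo : ℕ) : List α :=
  ((List.range (hi + 1 - lo)).map fun j => σ (hi - j)).flatten

/-- `catUp σ k = σ_1·σ_2⋯σ_k`. -/
def catUp {α : Type*} (σ : ℕ → List α) (k : ℕ) : List α :=
  ((List.range k).map fun j => σ (j + 1)).flatten

/-- `σ^k`, the `k`-fold concatenation of `σ`. -/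
def repK {α : Type*} (σ : List α) (k : ℕ) : List α := (List.replicate k σ).flatten

/-- `ℝ₋·X = {t·x : t ≤ 0, x ∈ X}`. -/
def negSmul {m : ℕ} (X : Set (Fin m → ℝ)) : Set (Fin m → ℝ) :=
  {y | ∃ t : ℝ, t ≤ 0 ∧ ∃ x ∈ X, y = t • x}

/-- The cone `C(R)` generated by a finite set of rays. -/
def coneOf {m : ℕ} (R : Finset ((Fin m → ℝ) × ℝ)) : Set ((Fin m → ℝ) × ℝ) :=
  {y | ∃ t : ((Fin m → ℝ) × ℝ) → ℝ, (∀ p, 0 ≤ t p) ∧ y = ∑ p ∈ R, t p • p}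

/-- The polyhedral convex set `P(R) = {x : (x,1) ∈ C(R)}`. -/
def polyOf {m : ℕ} (R : Finset ((Fin m → ℝ) × ℝ)) : Set (Fin m → ℝ) :=
  {x | (x, (1 : ℝ)) ∈ coneOf R}

open Filter Topology Set Finset

/-!
Let `M` be a DFA for `L` with `n` states, and put `pumpDir τ β = ρ(β) - ξ(τ)`. Cutting a loop `b`
out of a word changes `ρ` by a nonnegative multiple of such a direction,
`ρ(a b c) = ρ(a c) + r^|a| (r^|b| - 1) • pumpDir b c`, and cutting a loop out of `τ` or `β`
splits `pumpDir τ β` in the same way (here `τ` loops at a reachable state from which `β` is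
accepted). By induction on length, every `(ρ(σ), 1)` with `σ ∈ L` is therefore a nonnegative
combination of the rays `(ρ(σ), 1)` with `σ ∈ L`, `|σ| ≤ n`, and `(pumpDir τ β, 0)` with
`|τ|, |β| ≤ n`. These rays lie in the nonnegative orthant, so `P(R)` is closed; being convex, it
contains `cl(conv(ρ(L)))`. Conversely, `ρ(a τᵏ β)` runs off to infinity along `pumpDir τ β`, so
these directions are recession directions of `cl(conv(ρ(L)))`, which therefore contains `P(R)`.
-/

section Digits

variable {r m : ℕ}

noncomputable def pumpDir (r m : ℕ) (τ β : Word r m) : Fin m → ℝ :=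
  rho r m β - xi r m τ

lemma rho_append (u v : Word r m) : rho r m (u ++ v) = Gam r m u (rho r m v) := by
  induction u with
  | nil => simp [Gam, rho]
  | cons b u ih =>
    simp only [List.cons_append, rho, ih, Gam, List.length_cons, pow_succ]
    module

lemma Gam_sub_Gam (σ : Word r m) (x y : Fin m → ℝ) :
    Gam r m σ x - Gam r m σ y = (r : ℝ) ^ σ.length • (x - y) := by
  simp only [Gam, smul_sub]
  abel

lemma one_lt_pow_length (hr : 1 < r) {σ : Word r m} (hσ : σ ≠ []) :
    1 < (r : ℝ) ^ σ.length :=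
  one_lt_pow₀ (by exact_mod_cast hr) (by simpa using hσ)

lemma Gam_sub_xi (hr : 1 < r) {σ : Word r m} (hσ : σ ≠ []) (x : Fin m → ℝ) :
    Gam r m σ x - xi r m σ = (r : ℝ) ^ σ.length • (x - xi r m σ) := by
  have h : 1 - (r : ℝ) ^ σ.length ≠ 0 := (sub_neg.2 (one_lt_pow_length hr hσ)).ne
  simp only [Gam, xi]
  match_scalars <;> field_simp; ring

lemma sub_one_smul_pumpDir (hr : 1 < r) (τ β : Word r m) :
    ((r : ℝ) ^ τ.length - 1) • pumpDir r m τ β = rho r m (τ ++ β) - rho r m β := by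
  rcases eq_or_ne τ [] with rfl | hτ
  · simp
  have h := Gam_sub_xi hr hτ (rho r m β)
  rw [rho_append, pumpDir, sub_smul, one_smul, ← h]
  abel

lemma rho_pump (hr : 1 < r) (a b c : Word r m) :
    rho r m (a ++ b ++ c) =
      rho r m (a ++ c) + ((r : ℝ) ^ a.length * ((r : ℝ) ^ b.length - 1)) • pumpDir r m b c := by
  rw [mul_smul, sub_one_smul_pumpDir hr, List.append_assoc, rho_append a, rho_append a,
    ← Gam_sub_Gam]
  abel

lemma pumpDir_pump (hr : 1 < r) (τ a b c : Word r m) :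
    pumpDir r m τ (a ++ b ++ c) =
      pumpDir r m τ (a ++ c) +
        ((r : ℝ) ^ a.length * ((r : ℝ) ^ b.length - 1)) • pumpDir r m b c := by
  simp only [pumpDir, rho_pump hr a b c]
  abel

lemma sub_one_smul_pumpDir_pump (hr : 1 < r) (a b c β : Word r m) :
    ((r : ℝ) ^ (a ++ b ++ c).length - 1) • pumpDir r m (a ++ b ++ c) β =
      ((r : ℝ) ^ (a ++ c).length - 1) • pumpDir r m (a ++ c) β +
        ((r : ℝ) ^ a.length * ((r : ℝ) ^ b.length - 1)) • pumpDir r m b (c ++ β) := by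
  have h := rho_pump hr a b (c ++ β)
  rw [sub_one_smul_pumpDir hr, sub_one_smul_pumpDir hr]
  simp only [List.append_assoc] at h ⊢
  rw [h]
  abel

lemma rho_repK_append (hr : 1 < r) {τ : Word r m} (hτ : τ ≠ []) (β : Word r m) (k : ℕ) :
    rho r m (repK τ k ++ β) = ((r : ℝ) ^ τ.length) ^ k • pumpDir r m τ β + xi r m τ := by
  induction k with
  | zero => simp [repK, pumpDir]
  | succ k ih =>
    rw [← sub_eq_iff_eq_add] at ih ⊢
    rw [repK, List.replicate_succ, List.flatten_cons, List.append_assoc, rho_append,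
      Gam_sub_xi hr hτ, ← repK, ih, smul_smul, pow_succ']

lemma rho_nonneg (σ : Word r m) : 0 ≤ rho r m σ := by
  induction σ with
  | nil => simp [rho]
  | cons b σ ih =>
    rw [rho]
    exact add_nonneg (fun j => by simp) (smul_nonneg (by positivity) ih)

lemma pumpDir_nonneg (hr : 1 ≤ r) (τ β : Word r m) : 0 ≤ pumpDir r m τ β := by
  have h : (1 - (r : ℝ) ^ τ.length)⁻¹ ≤ 0 :=
    inv_nonpos.2 (sub_nonpos.2 (one_le_pow₀ (by exact_mod_cast hr)))
  rw [pumpDir, xi, sub_nonneg]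
  exact (smul_nonpos_of_nonpos_of_nonneg h (rho_nonneg τ)).trans (rho_nonneg β)

lemma pow_mul_pow_sub_one_nonneg (hr : 1 ≤ r) (a b : Word r m) :
    0 ≤ (r : ℝ) ^ a.length * ((r : ℝ) ^ b.length - 1) :=
  mul_nonneg (by positivity) (sub_nonneg.2 (one_le_pow₀ (by exact_mod_cast hr)))

end Digits

section Convexity

variable {E : Type*} [AddCommGroup E] [Module ℝ E]

lemma add_sum_smul_mem {ι : Type*} {C : Set E} {s : Finset ι} {d : ι → E} {t : ι → ℝ}
    (ht : ∀ i ∈ s, 0 ≤ t i) (hd : ∀ i ∈ s, ∀ x ∈ C, ∀ c : ℝ, 0 ≤ c → x + c • d i ∈ C)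
    {x : E} (hx : x ∈ C) : x + ∑ i ∈ s, t i • d i ∈ C := by
  classical
  induction s using Finset.induction_on with
  | empty => simpa using hx
  | insert i s hi ih =>
    rw [sum_insert hi, add_left_comm, add_comm]
    exact hd i (mem_insert_self i s) _
      (ih (fun j hj => ht j (mem_insert_of_mem hj)) fun j hj => hd j (mem_insert_of_mem hj))
      (t i) (ht i (mem_insert_self i s))

variable [TopologicalSpace E]

/-- Near a point `y` of the closure the coefficients are bounded by `(f y + 1) / f v`, so there
the set is the continuous image of a compact box. -/
lemma isClosed_setOf_nonneg_sum_smul [ContinuousAdd E] [ContinuousSMul ℝ E] [T2Space E]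
    (s : Finset E) (f : E →L[ℝ] ℝ) (hf : ∀ v ∈ s, 0 < f v) :
    IsClosed {y | ∃ μ : E → ℝ, (∀ v, 0 ≤ μ v) ∧ y = ∑ v ∈ s, μ v • v} := by
  classical
  set Φ : (E → ℝ) → E := fun μ => ∑ v ∈ s, μ v • v
  have hΦ : Continuous Φ := by fun_prop
  refine isClosed_of_closure_subset fun y hy => ?_
  set c := f y + 1
  set K : Set (E → ℝ) := univ.pi fun v => Icc 0 (if v ∈ s then c / f v else 0)
  have hK : IsCompact K := isCompact_univ_pi fun _ => isCompact_Icc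
  have hsub : {z | f z < c} ∩ {y | ∃ μ : E → ℝ, (∀ v, 0 ≤ μ v) ∧ y = Φ μ} ⊆ Φ '' K := by
    rintro _ ⟨hlt, μ, hμ, rfl⟩
    refine ⟨fun v => if v ∈ s then μ v else 0, fun v _ => ?_,
      Finset.sum_congr rfl fun v hv => by simp [hv]⟩
    dsimp only
    split_ifs with hv
    · refine ⟨hμ v, (le_div_iff₀ (hf v hv)).2 ?_⟩
      calc μ v * f v ≤ ∑ w ∈ s, μ w * f w :=
            single_le_sum (fun w hw => mul_nonneg (hμ w) (hf w hw).le) hv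
        _ = f (Φ μ) := by simp [Φ, map_sum, map_smul]
        _ ≤ c := hlt.le
    · exact ⟨le_rfl, le_rfl⟩
  have hyK : y ∈ closure (Φ '' K) :=
    closure_mono hsub ((isOpen_lt f.continuous continuous_const).inter_closure
      ⟨show f y < c from lt_add_one _, hy⟩)
  obtain ⟨μ, hμ, rfl⟩ := (hK.image hΦ).isClosed.closure_eq ▸ hyK
  exact ⟨μ, fun v => (hμ v trivial).1, rfl⟩

/-- The chord points `(1 - c / s i) • x + (c / s i) • (s i • d + e)` eventually lie in `C` and
converge to `x + c • d`. -/
lemma Convex.add_smul_mem_of_tendsto_atTop [IsTopologicalAddGroup E] [ContinuousSMul ℝ E]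
    {C : Set E} (hC : Convex ℝ C) (hCc : IsClosed C) {ι : Type*} {l : Filter ι} [l.NeBot]
    {s : ι → ℝ} {d e : E} (hs : Tendsto s l atTop) (hmem : ∀ᶠ i in l, s i • d + e ∈ C)
    {x : E} (hx : x ∈ C) {c : ℝ} (hc : 0 ≤ c) : x + c • d ∈ C := by
  have hlim : Tendsto (fun i => x + c • d + (c / s i) • (e - x)) l (𝓝 (x + c • d)) := by
    simpa using tendsto_const_nhds.add ((tendsto_const_nhds.div_atTop hs).smul_const (e - x))
  refine hCc.mem_of_tendsto hlim ?_
  filter_upwards [hmem, hs.eventually_ge_atTop (c + 1)] with i hi hsi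
  have hpos : 0 < s i := by linarith
  have hle : c / s i ≤ 1 := (div_le_one hpos).2 (by linarith)
  have heq : x + c • d + (c / s i) • (e - x) = (1 - c / s i) • x + (c / s i) • (s i • d + e) := by
    rw [smul_add, smul_smul, div_mul_cancel₀ c hpos.ne', smul_sub, sub_smul, one_smul]
    abel
  rw [heq]
  exact hC hx hi (sub_nonneg.2 hle) (div_nonneg hc hpos.le) (by ring)

end Convexity

section Cones

variable {m : ℕ} {R : Finset ((Fin m → ℝ) × ℝ)}

lemma mem_coneOf {p : (Fin m → ℝ) × ℝ} (hp : p ∈ R) : p ∈ coneOf R := by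
  classical
  refine ⟨Pi.single p 1, fun q => ?_, ?_⟩
  · rcases eq_or_ne q p with rfl | h <;> simp [*]
  · rw [sum_eq_single_of_mem p hp fun q _ hq => by simp [hq]]
    simp

lemma add_mem_coneOf {x y : (Fin m → ℝ) × ℝ} (hx : x ∈ coneOf R) (hy : y ∈ coneOf R) :
    x + y ∈ coneOf R := by
  obtain ⟨t, ht, rfl⟩ := hx
  obtain ⟨u, hu, rfl⟩ := hy
  exact ⟨t + u, fun p => add_nonneg (ht p) (hu p), by simp only [Pi.add_apply, add_smul,
    sum_add_distrib]⟩

lemma smul_mem_coneOf {c : ℝ} (hc : 0 ≤ c) {x : (Fin m → ℝ) × ℝ} (hx : x ∈ coneOf R) :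
    c • x ∈ coneOf R := by
  obtain ⟨t, ht, rfl⟩ := hx
  exact ⟨c • t, fun p => mul_nonneg hc (ht p), by simp only [Pi.smul_apply, smul_sum, smul_smul,
    smul_eq_mul]⟩

lemma mk_add_smul_mem_coneOf {y z : Fin m → ℝ} {a c : ℝ} (hc : 0 ≤ c)
    (hy : (y, a) ∈ coneOf R) (hz : (z, 0) ∈ coneOf R) : (y + c • z, a) ∈ coneOf R := by
  simpa using add_mem_coneOf hy (smul_mem_coneOf hc hz)

lemma isClosed_coneOf (hR : ∀ p ∈ R, 0 ≤ p) : IsClosed (coneOf R) := by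
  classical
  let f : ((Fin m → ℝ) × ℝ) →L[ℝ] ℝ :=
    (∑ j, ContinuousLinearMap.proj j).comp (ContinuousLinearMap.fst ℝ _ _) +
      ContinuousLinearMap.snd ℝ _ _
  have hf : ∀ p ∈ R.filter (· ≠ 0), 0 < f p := by
    intro p hp
    obtain ⟨hpR, hp0⟩ := mem_filter.1 hp
    obtain ⟨h₁, h₂⟩ : 0 ≤ p.1 ∧ 0 ≤ p.2 := hR p hpR
    have hfp : f p = ∑ j, p.1 j + p.2 := by simp [f]
    have hsum : 0 ≤ ∑ j, p.1 j := sum_nonneg fun j _ => h₁ j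
    rw [hfp]
    have hne : p.1 ≠ 0 ∨ p.2 ≠ 0 := by
      contrapose! hp0
      exact Prod.ext hp0.1 hp0.2
    rcases hne with h | h
    · obtain ⟨j, hj⟩ := Function.ne_iff.1 h
      linarith [sum_pos' (fun i _ => h₁ i) ⟨j, mem_univ j, (h₁ j).lt_of_ne' hj⟩]
    · linarith [h₂.lt_of_ne' h]
  have hfilter : ∀ t : (Fin m → ℝ) × ℝ → ℝ,
      ∑ p ∈ R.filter (· ≠ 0), t p • p = ∑ p ∈ R, t p • p :=
    fun t => sum_filter_of_ne fun p _ h hp => h (by rw [hp, smul_zero])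
  simpa only [coneOf, hfilter] using isClosed_setOf_nonneg_sum_smul _ f hf

lemma isClosed_polyOf (hR : ∀ p ∈ R, 0 ≤ p) : IsClosed (polyOf R) :=
  (isClosed_coneOf hR).preimage (by fun_prop)

lemma convex_polyOf (R : Finset ((Fin m → ℝ) × ℝ)) : Convex ℝ (polyOf R) := by
  intro x hx y hy a b ha hb hab
  have h := add_mem_coneOf (smul_mem_coneOf ha hx) (smul_mem_coneOf hb hy)
  simp only [Prod.smul_mk, Prod.mk_add_mk, smul_eq_mul, mul_one, hab] at h
  exact h

lemma polyOf_subset {C : Set (Fin m → ℝ)} (hC : Convex ℝ C)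
    (hR : ∀ p ∈ R, (p.2 = 1 ∧ p.1 ∈ C) ∨ (p.2 = 0 ∧ ∀ x ∈ C, ∀ c : ℝ, 0 ≤ c → x + c • p.1 ∈ C)) :
    polyOf R ⊆ C := by
  classical
  rintro x ⟨t, ht, hx⟩
  rw [← sum_filter_not_add_sum_filter R (fun p => p.2 = 0)] at hx
  have hV : ∀ p ∈ R.filter (fun p => ¬p.2 = 0), p.2 = 1 ∧ p.1 ∈ C := fun p hp =>
    ((hR p (mem_filter.1 hp).1).resolve_right fun h => (mem_filter.1 hp).2 h.1)
  have hD : ∀ p ∈ R.filter (fun p => p.2 = 0), ∀ x ∈ C, ∀ c : ℝ, 0 ≤ c → x + c • p.1 ∈ C :=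
    fun p hp => ((hR p (mem_filter.1 hp).1).resolve_left
      fun h => by simp [(mem_filter.1 hp).2] at h).2
  have hweight : ∑ p ∈ R.filter (fun p => ¬p.2 = 0), t p = 1 := by
    have h := congrArg Prod.snd hx
    simp only [Prod.snd_add, Prod.snd_sum, Prod.smul_snd, smul_eq_mul] at h
    have h₀ : ∑ p ∈ R.filter (fun p => p.2 = 0), t p * p.2 = 0 :=
      sum_eq_zero fun p hp => by rw [(mem_filter.1 hp).2, mul_zero]
    have h₁ : ∑ p ∈ R.filter (fun p => ¬p.2 = 0), t p * p.2 =
        ∑ p ∈ R.filter (fun p => ¬p.2 = 0), t p :=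
      sum_congr rfl fun p hp => by rw [(hV p hp).1, mul_one]
    rw [h₀, h₁, add_zero] at h
    exact h.symm
  have hx₁ := congrArg Prod.fst hx
  simp only [Prod.fst_add, Prod.fst_sum, Prod.smul_fst] at hx₁
  rw [hx₁]
  exact add_sum_smul_mem (fun p _ => ht p) hD
    (hC.sum_mem (fun p _ => ht p) hweight fun p hp => (hV p hp).2)

end Cones

namespace DFA

variable {α σ : Type*} (M : DFA α σ)

def IsPumpable (τ β : List α) : Prop :=
  τ ≠ [] ∧ ∃ q ∈ Set.range M.eval, M.evalFrom q τ = q ∧ β ∈ M.acceptsFrom q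

variable {M}

lemma evalFrom_mem_range_eval {q : σ} (hq : q ∈ Set.range M.eval) (w : List α) :
    M.evalFrom q w ∈ Set.range M.eval := by
  obtain ⟨u, rfl⟩ := hq
  exact ⟨u ++ w, M.evalFrom_of_append _ u w⟩

lemma evalFrom_repK {q : σ} {τ : List α} (hτ : M.evalFrom q τ = q) (k : ℕ) :
    M.evalFrom q (repK τ k) = q := by
  induction k with
  | zero => rfl
  | succ k ih =>
    rw [repK, List.replicate_succ, List.flatten_cons, evalFrom_of_append, hτ, ← repK, ih]

lemma IsPumpable.exists_forall_mem_accepts {τ β : List α} (h : M.IsPumpable τ β) :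
    ∃ a, ∀ k, a ++ (repK τ k ++ β) ∈ M.accepts := by
  obtain ⟨-, _, ⟨a, rfl⟩, hτ, hβ⟩ := h
  refine ⟨a, fun k => ?_⟩
  rw [mem_accepts, eval, evalFrom_of_append, evalFrom_of_append, ← eval, evalFrom_repK hτ]
  exact hβ

variable [Fintype σ]

lemma exists_isPumpable_of_mem_accepts {w : List α} (hw : w ∈ M.accepts)
    (hlen : Fintype.card σ ≤ w.length) :
    ∃ a b c, w = a ++ b ++ c ∧ a.length + b.length ≤ Fintype.card σ ∧
      a ++ c ∈ M.accepts ∧ M.IsPumpable b c := by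
  obtain ⟨q, a, b, c, rfl, hab, hb, ha, hbq, hc⟩ := M.evalFrom_split hlen rfl
  have hc' : M.evalFrom q c ∈ M.accept := hc ▸ hw
  refine ⟨a, b, c, rfl, hab, ?_, hb, q, ⟨a, ha⟩, hbq, hc'⟩
  rwa [mem_accepts, eval, evalFrom_of_append, ha]

lemma IsPumpable.split_right {τ β : List α} (h : M.IsPumpable τ β)
    (hlen : Fintype.card σ ≤ β.length) :
    ∃ a b c, β = a ++ b ++ c ∧ a.length + b.length ≤ Fintype.card σ ∧
      M.IsPumpable τ (a ++ c) ∧ M.IsPumpable b c := by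
  obtain ⟨hτ, q, hq, hτq, hβ⟩ := h
  obtain ⟨q', a, b, c, rfl, hab, hb, ha, hbq, hc⟩ := M.evalFrom_split hlen rfl
  have hc' : M.evalFrom q' c ∈ M.accept := hc ▸ hβ
  refine ⟨a, b, c, rfl, hab, ⟨hτ, q, hq, hτq, ?_⟩,
    hb, q', ha ▸ evalFrom_mem_range_eval hq a, hbq, hc'⟩
  rwa [mem_acceptsFrom, evalFrom_of_append, ha]

lemma IsPumpable.split_left {τ β : List α} (h : M.IsPumpable τ β)
    (hlen : Fintype.card σ < τ.length) :
    ∃ a b c, τ = a ++ b ++ c ∧ a.length + b.length ≤ Fintype.card σ ∧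
      M.IsPumpable (a ++ c) β ∧ M.IsPumpable b (c ++ β) := by
  obtain ⟨-, q, hq, hτq, hβ⟩ := h
  obtain ⟨q', a, b, c, rfl, hab, hb, ha, hbq, hc⟩ := M.evalFrom_split hlen.le hτq
  have hc0 : c ≠ [] := by
    rintro rfl
    simp only [List.length_append, List.length_nil] at hlen
    omega
  refine ⟨a, b, c, rfl, hab, ⟨by simp [hc0], q, hq, ?_, hβ⟩,
    hb, q', ha ▸ evalFrom_mem_range_eval hq a, hbq, ?_⟩
  · rw [evalFrom_of_append, ha, hc]
  · rwa [mem_acceptsFrom, evalFrom_of_append, hc]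

end DFA

section Recession

variable {r m : ℕ} {Q : Type*} {M : DFA (Alpha r m) Q}

/-- The accepted words `a τᵏ β` satisfy `ρ(a τᵏ β) = (r^|a| r^(k|τ|)) • pumpDir τ β + Γ_a(ξ(τ))`. -/
lemma add_smul_pumpDir_mem_closure (hr : 1 < r) {τ β : Word r m} (h : M.IsPumpable τ β)
    {x : Fin m → ℝ} (hx : x ∈ closure (convexHull ℝ (rhoSet r m M.accepts))) {c : ℝ}
    (hc : 0 ≤ c) : x + c • pumpDir r m τ β ∈ closure (convexHull ℝ (rhoSet r m M.accepts)) := by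
  obtain ⟨a, ha⟩ := h.exists_forall_mem_accepts
  refine (convex_convexHull ℝ _).closure.add_smul_mem_of_tendsto_atTop isClosed_closure
    (l := atTop) (s := fun k => (r : ℝ) ^ a.length * ((r : ℝ) ^ τ.length) ^ k)
    (e := Gam r m a (xi r m τ))
    ?_ (Eventually.of_forall fun k => ?_) hx hc
  · exact (tendsto_pow_atTop_atTop_of_one_lt (one_lt_pow_length hr h.1)).const_mul_atTop
      (by positivity)
  · have hmem : rho r m (a ++ (repK τ k ++ β)) ∈ rhoSet r m M.accepts := ⟨_, ha k, rfl⟩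
    rw [rho_append, rho_repK_append hr h.1] at hmem
    convert subset_closure (subset_convexHull ℝ _ hmem) using 1
    simp only [Gam, smul_add, mul_smul]
    abel

end Recession

section Rays

variable {r m : ℕ} {Q : Type*} [Fintype Q] (M : DFA (Alpha r m) Q)

def raySet : Set ((Fin m → ℝ) × ℝ) :=
  (fun σ => (rho r m σ, 1)) '' {σ | σ ∈ M.accepts ∧ σ.length ≤ Fintype.card Q} ∪
    (fun p : Word r m × Word r m => (pumpDir r m p.1 p.2, 0)) ''
      {p | M.IsPumpable p.1 p.2 ∧ p.1.length ≤ Fintype.card Q ∧ p.2.length ≤ Fintype.card Q}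

lemma finite_raySet : (raySet M).Finite := by
  have h := List.finite_length_le (Alpha r m) (Fintype.card Q)
  exact ((h.subset fun _ hσ => hσ.2).image _).union
    (((h.prod h).subset fun _ hp => hp.2).image _)

noncomputable def rays : Finset ((Fin m → ℝ) × ℝ) := (finite_raySet M).toFinset

variable {M}

lemma mem_rays {p : (Fin m → ℝ) × ℝ} : p ∈ rays M ↔ p ∈ raySet M :=
  Set.Finite.mem_toFinset _

lemma nonneg_of_mem_rays (hr : 1 ≤ r) {p : (Fin m → ℝ) × ℝ} (hp : p ∈ rays M) : 0 ≤ p := by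
  rcases mem_rays.1 hp with ⟨σ, -, rfl⟩ | ⟨⟨τ, β⟩, -, rfl⟩
  · exact ⟨rho_nonneg σ, zero_le_one⟩
  · exact ⟨pumpDir_nonneg hr τ β, le_rfl⟩

lemma pumpDir_mem_coneOf_rays_of_length_le (hr : 1 < r) {τ β : Word r m}
    (h : M.IsPumpable τ β) (hτ : τ.length ≤ Fintype.card Q) :
    (pumpDir r m τ β, (0 : ℝ)) ∈ coneOf (rays M) := by
  induction hn : β.length using Nat.strong_induction_on generalizing τ β with
  | _ n ih =>
  by_cases hβ : β.length ≤ Fintype.card Q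
  · exact mem_coneOf (mem_rays.2 (Or.inr ⟨(τ, β), ⟨h, hτ, hβ⟩, rfl⟩))
  obtain ⟨a, b, c, rfl, hab, h₁, h₂⟩ := h.split_right (by omega)
  have hb : b.length ≠ 0 := by simpa using h₂.1
  simp only [List.length_append] at hn
  rw [pumpDir_pump hr]
  exact mk_add_smul_mem_coneOf (pow_mul_pow_sub_one_nonneg hr.le a b)
    (ih _ (by simp; omega) h₁ hτ rfl) (ih _ (by omega) h₂ (by omega) rfl)

lemma pumpDir_mem_coneOf_rays (hr : 1 < r) {τ β : Word r m} (h : M.IsPumpable τ β) :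
    (pumpDir r m τ β, (0 : ℝ)) ∈ coneOf (rays M) := by
  induction hn : τ.length using Nat.strong_induction_on generalizing τ β with
  | _ n ih =>
  by_cases hτ : τ.length ≤ Fintype.card Q
  · exact pumpDir_mem_coneOf_rays_of_length_le hr h hτ
  obtain ⟨a, b, c, rfl, hab, h₁, h₂⟩ := h.split_left (by omega)
  have hb : b.length ≠ 0 := by simpa using h₂.1
  have hpos : 0 < (r : ℝ) ^ (a ++ b ++ c).length - 1 := sub_pos.2 (one_lt_pow_length hr h.1)
  have hscaled : (((r : ℝ) ^ (a ++ b ++ c).length - 1) • pumpDir r m (a ++ b ++ c) β, (0 : ℝ)) ∈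
      coneOf (rays M) := by
    rw [sub_one_smul_pumpDir_pump hr]
    refine mk_add_smul_mem_coneOf (pow_mul_pow_sub_one_nonneg hr.le a b) ?_
      (pumpDir_mem_coneOf_rays_of_length_le hr h₂ (by omega))
    have hac := smul_mem_coneOf (sub_pos.2 (one_lt_pow_length hr h₁.1)).le
      (ih _ (by simp only [List.length_append] at hn ⊢; omega) h₁ rfl)
    rwa [Prod.smul_mk, smul_zero] at hac
  have h := smul_mem_coneOf (inv_nonneg.2 hpos.le) hscaled
  rwa [Prod.smul_mk, smul_zero, inv_smul_smul₀ hpos.ne'] at h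

lemma rho_mem_polyOf_rays (hr : 1 < r) {w : Word r m} (hw : w ∈ M.accepts) :
    rho r m w ∈ polyOf (rays M) := by
  induction hn : w.length using Nat.strong_induction_on generalizing w with
  | _ n ih =>
  by_cases hw' : w.length ≤ Fintype.card Q
  · exact mem_coneOf (mem_rays.2 (Or.inl ⟨w, ⟨hw, hw'⟩, rfl⟩))
  obtain ⟨a, b, c, rfl, hab, hac, hbc⟩ := M.exists_isPumpable_of_mem_accepts hw (by omega)
  have hb : b.length ≠ 0 := by simpa using hbc.1
  simp only [List.length_append] at hn
  show (_, _) ∈ coneOf (rays M)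
  rw [rho_pump hr]
  exact mk_add_smul_mem_coneOf (pow_mul_pow_sub_one_nonneg hr.le a b)
    (ih _ (by simp; omega) hac rfl) (pumpDir_mem_coneOf_rays hr hbc)

end Rays

theorem closure_convexHull_regular_eq_polyOf_general
    (r m : ℕ) (hr : 2 ≤ r)
    (L : Set (Word r m)) (hL : Language.IsRegular L) :
    ∃ R : Finset ((Fin m → ℝ) × ℝ), (∀ p ∈ R, 0 ≤ p.2) ∧
      closure (convexHull ℝ (rhoSet r m L)) = polyOf R := by
  obtain ⟨Q, _, M, rfl⟩ := hL
  have hnonneg : ∀ p ∈ rays M, 0 ≤ p := fun p hp => nonneg_of_mem_rays (by omega) hp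
  refine ⟨rays M, fun p hp => (hnonneg p hp).2, subset_antisymm ?_ ?_⟩
  · refine closure_minimal (convexHull_min ?_ (convex_polyOf _)) (isClosed_polyOf hnonneg)
    rintro _ ⟨w, hw, rfl⟩
    exact rho_mem_polyOf_rays hr hw
  · refine polyOf_subset (convex_convexHull ℝ _).closure fun p hp => ?_
    rcases mem_rays.1 hp with ⟨w, ⟨hw, -⟩, rfl⟩ | ⟨⟨τ, β⟩, ⟨h, -⟩, rfl⟩
    · exact Or.inl ⟨rfl, subset_closure (subset_convexHull ℝ _ ⟨w, hw, rfl⟩)⟩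
    · exact Or.inr ⟨rfl, fun x hx c hc => add_smul_pumpDir_mem_closure hr h hx hc⟩

/-- the closure of the convex hull of a regular set of integer vectors
is represented by a finite set of rays. -/
theorem closure_convexHull_regular_eq_polyOf
    (r m : ℕ) (hr : 2 ≤ r) (hm : 1 ≤ m)
    (L : Set (Word r m)) (hL : Language.IsRegular L) :
    ∃ R : Finset ((Fin m → ℝ) × ℝ), (∀ p ∈ R, 0 ≤ p.2) ∧
      closure (convexHull ℝ (rhoSet r m L)) = polyOf R :=
  closure_convexHull_regular_eq_polyOf_general r m hr L hL
end

section
/- Let k ≥ 1 and let σ_1,…,σ_k be nonempty words over Σ_{r^m}. Define t_i = r^{|σ_1⋯σ_{i−1}|}·(r^{|σ_i|} − 1)/(r^{|σ_1⋯σ_k|} − 1) for 1 ≤ i ≤ k (with |σ_1⋯σ_0| = 0). Then each t_i ≥ 0, Σ_{i=1}^k t_i = 1, and ξ(σ_1⋯σ_k) = Σ_{i=1}^k t_i·ξ(σ_i). In particular, ξ(σ_1⋯σ_k) lies in the convex hull of {ξ(σ_1),…,ξ(σ_k)}. -/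
lemma rho_append_s6 (r m : ℕ) (a b : Word r m) :
    rho r m (a ++ b) = rho r m a + (r : ℝ) ^ a.length • rho r m b := by
  induction a with
  | nil => simp [rho]
  | cons x xs ih =>
      simp only [List.cons_append, rho, List.length_cons, pow_succ', List.append_eq]
      rw [ih, smul_add, smul_smul, add_assoc]

lemma catUp_succ {α : Type*} (σ : ℕ → List α) (k : ℕ) :
    catUp σ (k + 1) = catUp σ k ++ σ (k + 1) := by
  simp [catUp, List.range_succ]

lemma length_catUp {r m : ℕ} (σ : ℕ → Word r m) (k : ℕ) :
    (catUp σ k).length = ∑ i ∈ Finset.Icc 1 k, (σ i).length := by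
  induction k with
  | zero => simp [catUp]
  | succ n ih =>
      rw [catUp_succ, List.length_append, ih,
        Finset.sum_Icc_succ_top (Nat.succ_le_succ (Nat.zero_le n))]

lemma rho_catUp (r m : ℕ) (σ : ℕ → Word r m) (k : ℕ) :
    rho r m (catUp σ k) = ∑ i ∈ Finset.Icc 1 k,
      (r : ℝ) ^ (∑ j ∈ Finset.Icc 1 (i - 1), (σ j).length) • rho r m (σ i) := by
  induction k with
  | zero => simp [catUp, rho]
  | succ n ih =>
      rw [catUp_succ, rho_append_s6, ih, length_catUp,
        Finset.sum_Icc_succ_top (Nat.succ_le_succ (Nat.zero_le n))]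
      simp

lemma telescope (r : ℝ) (L : ℕ → ℕ) (k : ℕ) :
    ∑ i ∈ Finset.Icc 1 k,
      r ^ (∑ j ∈ Finset.Icc 1 (i - 1), L j) * (r ^ L i - 1)
      = r ^ (∑ j ∈ Finset.Icc 1 k, L j) - 1 := by
  induction k with
  | zero => simp
  | succ n ih =>
      rw [Finset.sum_Icc_succ_top (Nat.succ_le_succ (Nat.zero_le n)), ih,
        Finset.sum_Icc_succ_top (Nat.succ_le_succ (Nat.zero_le n))]
      simp only [Nat.add_sub_cancel, pow_add]
      ring

/-- `ξ(σ_1⋯σ_k)` is the explicit convex combination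
`Σ tᵢ·ξ(σᵢ)` of the `ξ(σᵢ)`, hence lies in their convex hull. -/
theorem xi_catUp_convex_combination
    (r m : ℕ) (hr : 2 ≤ r) (hm : 1 ≤ m)
    (k : ℕ) (hk : 1 ≤ k) (σ : ℕ → Word r m)
    (hσ : ∀ i ∈ Finset.Icc 1 k, σ i ≠ [])
    (t : ℕ → ℝ)
    (ht : ∀ i ∈ Finset.Icc 1 k,
      t i = (r : ℝ) ^ (∑ j ∈ Finset.Icc 1 (i - 1), (σ j).length) *
        ((r : ℝ) ^ (σ i).length - 1) /
        ((r : ℝ) ^ (∑ j ∈ Finset.Icc 1 k, (σ j).length) - 1)) :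
    (∀ i ∈ Finset.Icc 1 k, 0 ≤ t i) ∧
    (∑ i ∈ Finset.Icc 1 k, t i) = 1 ∧
    xi r m (catUp σ k) = ∑ i ∈ Finset.Icc 1 k, t i • xi r m (σ i) ∧
    xi r m (catUp σ k) ∈
      convexHull ℝ {x : Fin m → ℝ | ∃ i ∈ Finset.Icc 1 k, x = xi r m (σ i)} := by
  have hr1 : (1 : ℝ) < (r : ℝ) := by exact_mod_cast lt_of_lt_of_le one_lt_two (by exact_mod_cast hr)
  have hlen : ∀ i ∈ Finset.Icc 1 k, 1 ≤ (σ i).length := by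
    intro i hi
    exact List.length_pos_iff.mpr (hσ i hi)
  have hS1 : 1 ≤ ∑ j ∈ Finset.Icc 1 k, (σ j).length := by
    calc 1 ≤ (σ 1).length := hlen 1 (Finset.mem_Icc.mpr ⟨le_refl 1, hk⟩)
    _ ≤ _ := Finset.single_le_sum (f := fun j => (σ j).length) (fun j _ => Nat.zero_le _)
        (Finset.mem_Icc.mpr ⟨le_refl 1, hk⟩)
  have hSgt : (1 : ℝ) < (r : ℝ) ^ (∑ j ∈ Finset.Icc 1 k, (σ j).length) :=
    one_lt_pow₀ hr1 (by omega)
  have hD : (r : ℝ) ^ (∑ j ∈ Finset.Icc 1 k, (σ j).length) - 1 ≠ 0 := by linarith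
  have hnonneg : ∀ i ∈ Finset.Icc 1 k, 0 ≤ t i := by
    intro i hi
    rw [ht i hi]
    apply div_nonneg
    · apply mul_nonneg (pow_nonneg (by positivity) _)
      have : (1 : ℝ) ≤ (r : ℝ) ^ (σ i).length := one_le_pow₀ (le_of_lt hr1)
      linarith
    · linarith
  have hsum : (∑ i ∈ Finset.Icc 1 k, t i) = 1 := by
    rw [Finset.sum_congr rfl ht, ← Finset.sum_div,
      telescope (r : ℝ) (fun j => (σ j).length) k, div_self hD]
  have heq : xi r m (catUp σ k) = ∑ i ∈ Finset.Icc 1 k, t i • xi r m (σ i) := by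
    unfold xi
    rw [rho_catUp, length_catUp, Finset.smul_sum]
    apply Finset.sum_congr rfl
    intro i hi
    rw [smul_smul, smul_smul]
    congr 1
    have hLi : (1 : ℝ) < (r : ℝ) ^ (σ i).length := one_lt_pow₀ hr1 (by
      have := hlen i hi; omega)
    have hLi' : (1 : ℝ) - (r : ℝ) ^ (σ i).length ≠ 0 := by linarith
    have hS' : (1 : ℝ) - (r : ℝ) ^ (∑ j ∈ Finset.Icc 1 k, (σ j).length) ≠ 0 := by linarith
    rw [ht i hi]
    field_simp
    ring
  refine ⟨hnonneg, hsum, heq, ?_⟩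
  rw [heq]
  apply (convex_convexHull ℝ _).sum_mem hnonneg hsum
  intro i hi
  exact subset_convexHull ℝ _ ⟨i, hi, rfl⟩
end
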